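/- Let X be a spiny symmetric set, x ∈ Xₙ an n-simplex with matrix form (x_{ij}) = μ_X(x). Then x is nondegenerate if and only if no row of the matrix (x_{ij}) contains a repeated element. -/

import Mathlib

open CategoryTheory Opposite

/-- The skeleton of the category of finite nonempty sets: objects are natural
numbers `n`, standing for `[n] = {0, …, n}`, morphisms are all functions. -/
def Ups : Type := ℕ

/-- The natural number underlying an object of `Ups`. -/
def Ups.toNat : Ups → ℕ := fun n => n

/-- The object `[n]` of `Ups`. -/
def Ups.of : ℕ → Ups := fun n => n

instance : Category Ups where
  Hom n m := Fin (n.toNat + 1) → Fin (m.toNat + 1)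
  id _ := _root_.id
  comp f g := g ∘ f

/-- A symmetric set is a presheaf on `Ups`. -/
abbrev SymmSet := Upsᵒᵖ ⥤ Type

/-- The map `ε_{ij} : [1] → [n]` sending `0, 1` to `i, j`. -/
def eps (n : ℕ) (i j : Fin (n + 1)) : Ups.of 1 ⟶ Ups.of n :=
  fun k => if k = 0 then i else j

/-- The set of `n`-simplices of a symmetric set. -/
abbrev simp (X : SymmSet) (n : ℕ) : Type := X.obj (op (Ups.of n))

/-- The Bousfield–Segal map `𝓑ₙ : Xₙ → X₁ⁿ`, `x ↦ (ε₀₁*x, …, ε₀ₙ*x)`. -/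
def BS (X : SymmSet) (n : ℕ) (x : simp X n) : Fin n → simp X 1 :=
  fun k => X.map (eps n 0 k.succ).op x

/-- The Segal map `𝓔ₙ : Xₙ → X₁ⁿ`, `x ↦ (ε₀₁*x, ε₁₂*x, …, ε₍ₙ₋₁₎ₙ*x)`. -/
def ES (X : SymmSet) (n : ℕ) (x : simp X n) : Fin n → simp X 1 :=
  fun k => X.map (eps n k.castSucc k.succ).op x

/-- The canonical map `μ_X` to matrices, `x ↦ (ε_{ij}* x)_{ij}`. -/
def muMat (X : SymmSet) (n : ℕ) (x : simp X n) :
    Fin (n + 1) → Fin (n + 1) → simp X 1 :=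
  fun i j => X.map (eps n i j).op x

/-- A symmetric set is spiny if all Bousfield–Segal maps are injective. -/
def Spiny (X : SymmSet) : Prop := ∀ n, Function.Injective (BS X n)
/-- The matrix symmetric set `Mat(S)`: `n`-simplices are functions `[n]×[n] → S`. -/
def MatS (S : Type) : SymmSet where
  obj k := Fin (k.unop.toNat + 1) → Fin (k.unop.toNat + 1) → S
  map f := TypeCat.ofHom fun M => fun a b => M (f.unop a) (f.unop b)
  map_id := by intros; rfl
  map_comp := by intros; rfl

/-- An `n`-simplex is degenerate if it is `ρ* y` for a noninvertible surjection
`ρ : [n] ↠ [m]` and an `m`-simplex `y`. -/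
def Degen (X : SymmSet) (n : ℕ) (x : simp X n) : Prop :=
  ∃ (m : ℕ) (ρ : Ups.of n ⟶ Ups.of m), Function.Surjective ρ ∧
    ¬ Function.Bijective ρ ∧ ∃ y : simp X m, x = X.map ρ.op y

/-- The `d`-skeleton of a symmetric set, as a symmetric subset. -/
def skel (X : SymmSet) (d : ℕ) : SymmSet where
  obj k := {x : X.obj k // ∃ (i : ℕ) (_ : i ≤ d) (α : k.unop ⟶ Ups.of i)
      (y : simp X i), x = X.map α.op y}
  map f := TypeCat.ofHom fun x => ⟨X.map f x.1, by
    obtain ⟨i, hi, α, y, hy⟩ := x.2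
    refine ⟨i, hi, f.unop ≫ α, y, ?_⟩
    rw [hy, ← FunctorToTypes.map_comp_apply]
    rfl⟩
  map_id := by
    intro k; ext x
    simp
  map_comp := by
    intro k k' k'' f g; ext x
    simp

/-- A symmetric set is `d`-skeletal when all simplices above dimension `d`
are degenerate. -/
def SkeletalLE (X : SymmSet) (d : ℕ) : Prop :=
  ∀ n, d < n → ∀ x : simp X n, Degen X n x

/-- `X` has dimension `d` when `d` is the least integer such that `X` is
`d`-skeletal. -/
def HasDim (X : SymmSet) (d : ℕ) : Prop :=
  IsLeast {m | SkeletalLE X m} d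

/-- A symmetric set is reduced when it has exactly one `0`-simplex. -/
def Reduced (X : SymmSet) : Prop :=
  Nonempty (simp X 0) ∧ Subsingleton (simp X 0)

/-- A partial group is a reduced spiny symmetric set. -/
def IsPartialGroup (X : SymmSet) : Prop := Reduced X ∧ Spiny X

/-- A partial group is trivial when it has no nonidentity elements. -/
def TrivialPG (X : SymmSet) : Prop := Subsingleton (simp X 1)

/-- The order of a partial group: the number of its elements (edges). -/
noncomputable def orderPG (X : SymmSet) : ℕ := Nat.card (simp X 1)

/-- An edge is an identity if it is in the image of the degeneracy `X₀ → X₁`. -/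
def isIdent (X : SymmSet) (e : simp X 1) : Prop :=
  ∃ v : simp X 0, e = X.map (Quiver.Hom.op
    ((fun _ => 0 : Fin 2 → Fin 1) : Ups.of 1 ⟶ Ups.of 0)) v

/-- The source vertex of an edge. -/
def srcE (X : SymmSet) (e : simp X 1) : simp X 0 :=
  X.map (Quiver.Hom.op ((fun _ => 0 : Fin 1 → Fin 2) : Ups.of 0 ⟶ Ups.of 1)) e

/-- `X` has (higher Segal) degree at most `k`: for each starry word `w` of
length `n+1 ≥ k+1`, if the last `k+1` faces `d_{n+1-k} w, …, d_{n+1} w` of `w`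
are Bousfield–Segal images of simplices, then so is `w`. -/
def HasDegLE (X : SymmSet) (k : ℕ) : Prop :=
  ∀ n, k ≤ n → ∀ w : Fin (n + 1) → simp X 1,
    (∀ a b, srcE X (w a) = srcE X (w b)) →
    (∀ i : Fin (n + 1), n ≤ (i : ℕ) + k →
      (fun j : Fin n => w (i.succAbove j)) ∈ Set.range (BS X n)) →
    w ∈ Set.range (BS X (n + 1))

/-- `X` has degree `d`: `d` is the least `k ≥ 1` with `HasDegLE X k`. -/
def DegreeIs (X : SymmSet) (d : ℕ) : Prop :=
  IsLeast {k | 1 ≤ k ∧ HasDegLE X k} d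

/-- `W`, with structure maps `i, j`, is a coproduct of `Y` and `Z` in the
category of partial groups. -/
def IsPGCoproduct (W Y Z : SymmSet) (i : Y ⟶ W) (j : Z ⟶ W) : Prop :=
  ∀ V : SymmSet, IsPartialGroup V → ∀ (f : Y ⟶ V) (g : Z ⟶ V),
    ∃! h : W ⟶ V, i ≫ h = f ∧ j ≫ h = g

/-- The nerve of a group `G`, as a symmetric set: an `n`-simplex is a matrix
`(g_{ij})` of elements of `G` satisfying the cocycle condition. -/
def grpNerve (G : Type) [Group G] : SymmSet where
  obj k := {M : Fin (k.unop.toNat + 1) → Fin (k.unop.toNat + 1) → G //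
      ∀ i j l, M i j * M j l = M i l}
  map f := TypeCat.ofHom fun M => ⟨fun a b => M.1 (f.unop a) (f.unop b),
    fun i j l => M.2 (f.unop i) (f.unop j) (f.unop l)⟩
  map_id := by intro k; rfl
  map_comp := by intros; rfl

/-!
Every map of `Υ` factors as a surjection followed by an injection, so a simplex is degenerate
exactly when it is pulled back along a non-injective map. In a spiny symmetric set not only
row `0` but every row `i` of the matrix form determines the simplex: conjugate by the
transposition `(0 i)`. If row `i` has `x_{ij} = x_{ik}` with `k ≠ i`, the map `θ` sending `k` to
`j` and fixing everything else leaves row `i` unchanged, so `θ* x = x` and `x` is degenerate.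
Conversely, if `x = f* y` with `f j = f k`, then columns `j` and `k` of `μ_X(x)` agree.
-/

lemma map_map_op (X : SymmSet) {a b c : ℕ} (f : Ups.of a ⟶ Ups.of b)
    (g : Ups.of b ⟶ Ups.of c) (x : simp X c) :
    X.map f.op (X.map g.op x) = X.map (f ≫ g).op x := by
  rw [op_comp, Functor.map_comp_apply]

lemma eps_comp {n p : ℕ} (i j : Fin (n + 1)) (f : Ups.of n ⟶ Ups.of p) :
    eps n i j ≫ f = eps p (f i) (f j) := by
  funext k
  change f (eps n i j k) = eps p (f i) (f j) k
  by_cases hk : k = 0 <;> simp [eps, hk]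

lemma muMat_map (X : SymmSet) {n p : ℕ} (f : Ups.of n ⟶ Ups.of p) (y : simp X p)
    (i j : Fin (n + 1)) :
    muMat X n (X.map f.op y) i j = muMat X p y (f i) (f j) := by
  unfold muMat
  rw [map_map_op, eps_comp]

lemma Function.exists_surjective_comp_injective {α β : Type*} [Finite α] [Nonempty α]
    (f : α → β) :
    ∃ (m : ℕ) (ρ : α → Fin (m + 1)) (σ : Fin (m + 1) → β),
      Function.Surjective ρ ∧ Function.Injective σ ∧ f = σ ∘ ρ := by
  obtain ⟨m, hm⟩ : ∃ m, Nat.card (Set.range f) = m + 1 :=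
    Nat.exists_eq_add_one.2 Nat.card_pos
  let e : Set.range f ≃ Fin (m + 1) := (Finite.equivFin _).trans (finCongr hm)
  refine ⟨m, e ∘ Set.rangeFactorization f, Subtype.val ∘ e.symm,
    e.surjective.comp Set.rangeFactorization_surjective,
    Subtype.val_injective.comp e.symm.injective, ?_⟩
  funext a
  simp [Set.rangeFactorization]

theorem degen_iff_exists_not_injective (X : SymmSet) (n : ℕ) (x : simp X n) :
    Degen X n x ↔ ∃ (p : ℕ) (f : Ups.of n ⟶ Ups.of p),
      ¬ Function.Injective f ∧ ∃ y : simp X p, x = X.map f.op y := by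
  constructor
  · rintro ⟨m, ρ, hρ, hρ', y, rfl⟩
    exact ⟨m, ρ, fun hinj => hρ' ⟨hinj, hρ⟩, y, rfl⟩
  · rintro ⟨p, f, hf, y, rfl⟩
    obtain ⟨m, ρ, σ, hρ, hσ, hfac⟩ :=
      Function.exists_surjective_comp_injective (f : Fin (n + 1) → Fin (p + 1))
    let ρ' : Ups.of n ⟶ Ups.of m := ρ
    let σ' : Ups.of m ⟶ Ups.of p := σ
    have hfac' : f = ρ' ≫ σ' := hfac
    refine ⟨m, ρ', hρ, fun hbij => hf (hfac ▸ hσ.comp hbij.1), X.map σ'.op y, ?_⟩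
    rw [map_map_op, hfac']

theorem Spiny.eq_of_muMat_row_eq {X : SymmSet} (hX : Spiny X) {n : ℕ} {x x' : simp X n}
    (i : Fin (n + 1)) (h : ∀ l, muMat X n x i l = muMat X n x' i l) : x = x' := by
  let s : Ups.of n ⟶ Ups.of n := ⇑(Equiv.swap 0 i)
  have hss : s ≫ s = 𝟙 _ := funext (Equiv.swap_apply_self 0 i)
  have hsx : X.map s.op x = X.map s.op x' := hX n <| funext fun l => by
    change muMat X n (X.map s.op x) 0 l.succ = muMat X n (X.map s.op x') 0 l.succ
    rw [muMat_map, muMat_map]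
    exact h _
  simpa [map_map_op, hss] using congrArg (X.map s.op) hsx

theorem Spiny.degen_of_muMat_eq {X : SymmSet} (hX : Spiny X) {n : ℕ} {x : simp X n}
    {i j k : Fin (n + 1)} (hjk : j ≠ k) (h : muMat X n x i j = muMat X n x i k) :
    Degen X n x := by
  wlog hki : k ≠ i generalizing j k
  · exact this hjk.symm h.symm (by rintro rfl; exact hjk (not_not.1 hki).symm)
  let θ : Ups.of n ⟶ Ups.of n := Function.update id k j
  have hθ : X.map θ.op x = x := hX.eq_of_muMat_row_eq i fun l => by
    rw [muMat_map]
    change muMat X n x (Function.update id k j i) (Function.update id k j l) = _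
    rw [Function.update_of_ne hki.symm]
    rcases eq_or_ne l k with rfl | hl
    · rw [Function.update_self, ← h]
      rfl
    · rw [Function.update_of_ne hl]
      rfl
  refine (degen_iff_exists_not_injective X n x).2 ⟨n, θ, fun hinj => hjk (hinj ?_), x, hθ.symm⟩
  change Function.update id k j j = Function.update id k j k
  rw [Function.update_of_ne hjk, Function.update_self]
  rfl

/-- In a spiny symmetric set, an `n`-simplex is nondegenerate if and only if no
row of its matrix form `μ_X(x) = (x_{ij})` contains a repeated element. -/
theorem nondegenerate_iff_rows_injective
    (X : SymmSet) (hX : Spiny X) (n : ℕ) (x : simp X n) :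
    ¬ Degen X n x ↔
      ∀ i j k : Fin (n + 1), muMat X n x i j = muMat X n x i k → j = k := by
  constructor
  · intro hnd i j k hjk
    by_contra hne
    exact hnd (hX.degen_of_muMat_eq hne hjk)
  · intro hrows hdeg
    obtain ⟨p, f, hf, y, rfl⟩ := (degen_iff_exists_not_injective X n x).1 hdeg
    obtain ⟨j, k, hfjk, hjk⟩ : ∃ j k : Fin (n + 1), f j = f k ∧ j ≠ k :=
      Function.not_injective_iff.1 hf
    exact hjk (hrows 0 j k (by rw [muMat_map, muMat_map, hfjk]))
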